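/- Assume s_c ∈ (s₀, ∞) satisfies ∫₀¹ (s_c² − 2Ω(p))^{-3/2} dp = 1, that R₀ = lim_{s→s₀+} R(s) is finite, and let r ≥ R₀; let s₊(r) be the unique solution of R(s) = r in (s_c, ∞), and let F ∈ ℝ be a fixed constant. Then the function s ↦ κ(s;r) = 2(F − σ(s;r)) − (r − R(s))² is strictly increasing on (s₀, s₊(r)), strictly decreasing on (s₊(r), ∞), and κ(s;r) → −∞ as s → ∞. -/

import Mathlib

open MeasureTheory Set Filter

noncomputable section

/-- `Omeg ω p = ∫₀^p ω(t) dt`, the primitive of the vorticity function. -/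
def Omeg (ω : ℝ → ℝ) (p : ℝ) : ℝ := ∫ t in (0:ℝ)..p, ω t

/-- `s0 ω = sqrt (max_{p ∈ [0,1]} 2 Ω(p))`. -/
def s0 (ω : ℝ → ℝ) : ℝ := Real.sqrt (sSup ((fun p => 2 * Omeg ω p) '' Icc (0:ℝ) 1))

/-- `Hp ω p s = (s² − 2Ω(p))^{-1/2}`. -/
def Hp (ω : ℝ → ℝ) (p s : ℝ) : ℝ := (Real.sqrt (s ^ 2 - 2 * Omeg ω p))⁻¹

/-- `Hfun ω p s = H(p; s) = ∫₀^p (s² − 2Ω(τ))^{-1/2} dτ`. -/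
def Hfun (ω : ℝ → ℝ) (p s : ℝ) : ℝ := ∫ τ in (0:ℝ)..p, Hp ω τ s

/-- `dd ω s = d(s) = H(1; s)`. -/
def dd (ω : ℝ → ℝ) (s : ℝ) : ℝ := Hfun ω 1 s

/-- `RR ω s = R(s) = s²/2 − Ω(1) + d(s)`, the Bernoulli constant of the stream solution. -/
def RR (ω : ℝ → ℝ) (s : ℝ) : ℝ := s ^ 2 / 2 - Omeg ω 1 + dd ω s

/-- `sigmaFun ω s r = σ(s; r)`. -/
def sigmaFun (ω : ℝ → ℝ) (s r : ℝ) : ℝ :=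
  ∫ p in (0:ℝ)..1,
    (1 / (2 * (Hp ω p s) ^ 2) - Hfun ω p s - Omeg ω p + Omeg ω 1 + r) * Hp ω p s

/-- Partial derivative in the first (horizontal) variable `q`. -/
def dq (f : ℝ → ℝ → ℝ) (q p : ℝ) : ℝ := deriv (fun x => f x p) q

/-- Partial derivative in the second (vertical) variable `p`. -/
def dp (f : ℝ → ℝ → ℝ) (q p : ℝ) : ℝ := deriv (fun y => f q y) p

/-- The height system with Bernoulli constant `r` on the strip `S = ℝ × [0,1]`. -/
structure HeightSol (ω : ℝ → ℝ) (r : ℝ) (h : ℝ → ℝ → ℝ) : Prop where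
  smooth : ContDiff ℝ 2 (Function.uncurry h)
  hp_pos : ∀ q : ℝ, ∀ p ∈ Icc (0:ℝ) 1, 0 < dp h q p
  pde : ∀ q : ℝ, ∀ p ∈ Icc (0:ℝ) 1,
    (1 + (dq h q p) ^ 2) / (dp h q p) ^ 2 * dp (dp h) q p
      - 2 * (dq h q p) / (dp h q p) * dp (dq h) q p
      + dq (dq h) q p - ω p * dp h q p = 0
  top : ∀ q : ℝ, (1 + (dq h q 1) ^ 2) / (2 * (dp h q 1) ^ 2) + h q 1 = r
  bot : ∀ q : ℝ, h q 0 = 0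

/-- The flow force of a height function `h`, computed on the vertical line through `q`. -/
def flowForce (ω : ℝ → ℝ) (r : ℝ) (h : ℝ → ℝ → ℝ) (q : ℝ) : ℝ :=
  ∫ p in (0:ℝ)..1,
    ((1 - (dq h q p) ^ 2) / (2 * (dp h q p) ^ 2) - h q p - Omeg ω p + Omeg ω 1 + r) * dp h q p

/-- `wfun ω s h = w^{(s)} = h − H(·; s)`. -/
def wfun (ω : ℝ → ℝ) (s : ℝ) (h : ℝ → ℝ → ℝ) (q p : ℝ) : ℝ := h q p - Hfun ω p s

/-- The flow force flux function `Φ^{(s)}`. -/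
def Phi (ω : ℝ → ℝ) (s : ℝ) (h : ℝ → ℝ → ℝ) (q p : ℝ) : ℝ :=
  ∫ p' in (0:ℝ)..p,
    ((dp (wfun ω s h) q p') ^ 2 / (dp h q p' * (Hp ω p' s) ^ 2)
      - (dq (wfun ω s h) q p') ^ 2 / dp h q p')

/-- `h ∈ C^{2,γ}(S̄)`: `h` is twice continuously differentiable, all partial derivatives of
order ≤ 2 are bounded on the strip, and the second-order derivatives are uniformly
γ-Hölder continuous on the strip. -/
def C2Holder (γ : ℝ) (h : ℝ → ℝ → ℝ) : Prop :=
  ContDiff ℝ 2 (Function.uncurry h) ∧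
  (∀ g ∈ ([h, dq h, dp h, dq (dq h), dp (dq h), dp (dp h)] : List (ℝ → ℝ → ℝ)),
    ∃ M : ℝ, ∀ q : ℝ, ∀ p ∈ Icc (0:ℝ) 1, |g q p| ≤ M) ∧
  (∀ g ∈ ([dq (dq h), dp (dq h), dp (dp h)] : List (ℝ → ℝ → ℝ)),
    ∃ C : ℝ, ∀ q q' : ℝ, ∀ p ∈ Icc (0:ℝ) 1, ∀ p' ∈ Icc (0:ℝ) 1,
      |g q p - g q' p'| ≤ C * Real.sqrt ((q - q') ^ 2 + (p - p') ^ 2) ^ γ)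

end

/-!
Integrating `H · H_p = (H²/2)'` and writing `1/(2 H_p²) - Ω(p) = (s² - 2Ω(p))/2 - s²/2` gives
`σ(s;r) = E(s) + (r + Ω(1) - s²/2) d(s) - d(s)²/2` with `E(s) = ∫₀¹ (s² - 2Ω)^{1/2}`, hence
`κ(s;r) = 2F - 2E(s) - (r + Ω(1) - s²/2)²`. Differentiating under the integral sign,
`E' = s d`, so `κ'(s) = 2s (r - R(s))`, and `R'(s) = s (1 - J(s))` with `J(s) = ∫₀¹ H_p³`.
Since `J` is strictly decreasing and `J(s_c) = 1`, `R` decreases on `(s₀, s_c]`, where it stays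
below `R₀ ≤ r`, and increases on `[s_c, ∞)`, where it crosses `r` at `s₊`. This gives the sign of
`κ'`; and `κ → -∞` because `E ≥ 0`.
-/

theorem StrictAntiOn.lt_of_tendsto_nhdsGT {α β : Type*} [LinearOrder α] [TopologicalSpace α]
    [OrderTopology α] [DenselyOrdered α] [LinearOrder β] [TopologicalSpace β]
    [OrderClosedTopology β] {f : α → β} {a b x : α} {L : β} (hf : StrictAntiOn f (Ioc a b))
    (hL : Tendsto f (nhdsWithin a (Ioi a)) (nhds L)) (hx : x ∈ Ioc a b) : f x < L := by
  obtain ⟨t, hat, htx⟩ := exists_between hx.1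
  have ht : t ∈ Ioc a b := ⟨hat, htx.le.trans hx.2⟩
  have := nhdsGT_neBot_of_exists_gt ⟨t, hat⟩
  have hft : f t ≤ L := ge_of_tendsto hL <| eventually_of_mem (Ioo_mem_nhdsGT hat)
    fun u hu => (hf ⟨hu.1, hu.2.le.trans ht.2⟩ ht hu.2).le
  exact (hf ht hx htx).trans_le hft

open intervalIntegral

theorem hasDerivAt_intervalIntegral_of_continuousOn {F F' : ℝ → ℝ → ℝ} {K : Set ℝ} {a b x₀ : ℝ}
    (hK : K ∈ nhds x₀) (hKc : IsCompact K) (hF : ∀ x ∈ K, ContinuousOn (F x) (uIcc a b))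
    (hF' : ContinuousOn (Function.uncurry F') (K ×ˢ uIcc a b))
    (hderiv : ∀ x ∈ K, ∀ t ∈ uIcc a b, HasDerivAt (F · t) (F' x t) x) :
    HasDerivAt (fun x => ∫ t in a..b, F x t) (∫ t in a..b, F' x₀ t) x₀ := by
  have hx₀ : x₀ ∈ K := mem_of_mem_nhds hK
  obtain ⟨C, hC⟩ := (hKc.prod isCompact_uIcc).exists_bound_of_continuousOn hF'
  have hF'x₀ : ContinuousOn (F' x₀) (uIcc a b) :=
    hF'.comp (continuousOn_const.prodMk continuousOn_id) fun t ht => ⟨hx₀, ht⟩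
  refine (intervalIntegral.hasDerivAt_integral_of_dominated_loc_of_deriv_le (bound := fun _ => C)
    hK (eventually_of_mem hK fun x hx => ?_) (hF x₀ hx₀).intervalIntegrable
    (hF'x₀.aestronglyMeasurable_of_subset_isCompact isCompact_uIcc measurableSet_uIoc
      uIoc_subset_uIcc) ?_ intervalIntegrable_const ?_).2
  · exact (hF x hx).aestronglyMeasurable_of_subset_isCompact isCompact_uIcc measurableSet_uIoc
      uIoc_subset_uIcc
  · exact ae_of_all _ fun t ht x hx => hC (x, t) ⟨hx, uIoc_subset_uIcc ht⟩
  · exact ae_of_all _ fun t ht x hx => hderiv x hx t (uIoc_subset_uIcc ht)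

theorem hasDerivAt_sqrt_sq_sub {c x : ℝ} (hx : c < x ^ 2) :
    HasDerivAt (fun y => Real.sqrt (y ^ 2 - c)) (x * (Real.sqrt (x ^ 2 - c))⁻¹) x := by
  have hpos : 0 < Real.sqrt (x ^ 2 - c) := Real.sqrt_pos.2 (sub_pos.2 hx)
  refine (((hasDerivAt_pow 2 x).sub_const c).sqrt (sub_pos.2 hx).ne').congr_deriv ?_
  field_simp
  ring

theorem hasDerivAt_inv_sqrt_sq_sub {c x : ℝ} (hx : c < x ^ 2) :
    HasDerivAt (fun y => (Real.sqrt (y ^ 2 - c))⁻¹) (-(x * (Real.sqrt (x ^ 2 - c))⁻¹ ^ 3)) x := by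
  have hpos : 0 < Real.sqrt (x ^ 2 - c) := Real.sqrt_pos.2 (sub_pos.2 hx)
  refine ((hasDerivAt_sqrt_sq_sub hx).inv hpos.ne').congr_deriv ?_
  field_simp

noncomputable section StreamSolution

def Efun (ω : ℝ → ℝ) (s : ℝ) : ℝ := ∫ p in (0:ℝ)..1, Real.sqrt (s ^ 2 - 2 * Omeg ω p)

def Jfun (ω : ℝ → ℝ) (s : ℝ) : ℝ := ∫ p in (0:ℝ)..1, Hp ω p s ^ 3

def kappa (ω : ℝ → ℝ) (F r s : ℝ) : ℝ := 2 * (F - sigmaFun ω s r) - (r - RR ω s) ^ 2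

variable {ω : ℝ → ℝ}

theorem continuous_Omeg (hω : Continuous ω) : Continuous (Omeg ω) :=
  continuous_primitive (fun _ _ => hω.intervalIntegrable _ _) 0

theorem two_mul_Omeg_le_s0_sq (hω : Continuous ω) {p : ℝ} (hp : p ∈ Icc (0:ℝ) 1) :
    2 * Omeg ω p ≤ s0 ω ^ 2 := by
  have hbdd : BddAbove ((fun p => 2 * Omeg ω p) '' Icc (0:ℝ) 1) :=
    (isCompact_Icc.image (continuous_const.mul (continuous_Omeg hω))).bddAbove
  have h0 : 0 ≤ sSup ((fun p => 2 * Omeg ω p) '' Icc (0:ℝ) 1) := by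
    simpa [Omeg] using le_csSup hbdd ⟨0, left_mem_Icc.2 zero_le_one, rfl⟩
  rw [s0, Real.sq_sqrt h0]
  exact le_csSup hbdd ⟨p, hp, rfl⟩

theorem pos_of_s0_lt {s : ℝ} (hs : s0 ω < s) : 0 < s :=
  (Real.sqrt_nonneg _).trans_lt hs

theorem two_mul_Omeg_lt_sq (hω : Continuous ω) {s p : ℝ} (hs : s0 ω < s)
    (hp : p ∈ Icc (0:ℝ) 1) : 2 * Omeg ω p < s ^ 2 :=
  (two_mul_Omeg_le_s0_sq hω hp).trans_lt
    (pow_lt_pow_left₀ hs (Real.sqrt_nonneg _) two_ne_zero)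

theorem continuousOn_uncurry_Hp (hω : Continuous ω) :
    ContinuousOn (fun z : ℝ × ℝ => Hp ω z.2 z.1) (Ioi (s0 ω) ×ˢ Icc 0 1) := by
  have hΩ := continuous_Omeg hω
  refine ContinuousOn.inv₀ (by fun_prop) fun z hz => ?_
  exact (Real.sqrt_pos.2 (sub_pos.2 (two_mul_Omeg_lt_sq hω hz.1 hz.2))).ne'

theorem continuousOn_Hp (hω : Continuous ω) {s : ℝ} (hs : s0 ω < s) :
    ContinuousOn (Hp ω · s) (Icc 0 1) :=
  (continuousOn_uncurry_Hp hω).comp (continuousOn_const.prodMk continuousOn_id) fun _ hp => ⟨hs, hp⟩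

theorem hasDerivAt_Hfun (hω : Continuous ω) {s p : ℝ} (hs : s0 ω < s) (hp : p ∈ Icc (0:ℝ) 1) :
    HasDerivAt (Hfun ω · s) (Hp ω p s) p := by
  have hΩ := continuous_Omeg hω
  set U := {τ | 2 * Omeg ω τ < s ^ 2}
  have hU : IsOpen U := isOpen_lt (by fun_prop) continuous_const
  have hHp : ContinuousOn (Hp ω · s) U :=
    (Continuous.continuousOn (by fun_prop)).inv₀ fun τ hτ => (Real.sqrt_pos.2 (sub_pos.2 hτ)).ne'
  have hsub : uIcc 0 p ⊆ U := fun τ hτ => by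
    rw [uIcc_of_le hp.1] at hτ
    exact two_mul_Omeg_lt_sq hω hs ⟨hτ.1, hτ.2.trans hp.2⟩
  have hpU : p ∈ U := two_mul_Omeg_lt_sq hω hs hp
  exact integral_hasDerivAt_right (hHp.mono hsub).intervalIntegrable
    (hHp.stronglyMeasurableAtFilter hU p hpU) (hHp.continuousAt (hU.mem_nhds hpU))

theorem intervalIntegrable_Hfun_mul_Hp (hω : Continuous ω) {s : ℝ} (hs : s0 ω < s) :
    IntervalIntegrable (fun p => Hfun ω p s * Hp ω p s) volume 0 1 :=
  ContinuousOn.intervalIntegrable_of_Icc zero_le_one fun p hp =>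
    (hasDerivAt_Hfun hω hs hp).continuousAt.continuousWithinAt.mul (continuousOn_Hp hω hs p hp)

theorem integral_Hfun_mul_Hp (hω : Continuous ω) {s : ℝ} (hs : s0 ω < s) :
    ∫ p in (0:ℝ)..1, Hfun ω p s * Hp ω p s = dd ω s ^ 2 / 2 := by
  have hderiv : ∀ p ∈ uIcc (0:ℝ) 1,
      HasDerivAt (fun q => Hfun ω q s ^ 2 / 2) (Hfun ω p s * Hp ω p s) p := fun p hp => by
    rw [uIcc_of_le zero_le_one] at hp
    refine (((hasDerivAt_Hfun hω hs hp).pow 2).div_const 2).congr_deriv ?_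
    norm_num
    ring
  rw [integral_eq_sub_of_hasDerivAt hderiv (intervalIntegrable_Hfun_mul_Hp hω hs),
    show Hfun ω 0 s = 0 from integral_same]
  norm_num [dd]

theorem sigmaFun_eq (hω : Continuous ω) {s : ℝ} (hs : s0 ω < s) (r : ℝ) :
    sigmaFun ω s r = Efun ω s + (r + Omeg ω 1 - s ^ 2 / 2) * dd ω s - dd ω s ^ 2 / 2 := by
  have hA : Continuous fun p => Real.sqrt (s ^ 2 - 2 * Omeg ω p) := by
    have hΩ := continuous_Omeg hω; fun_prop
  have hHp : IntervalIntegrable (Hp ω · s) volume 0 1 :=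
    (continuousOn_Hp hω hs).intervalIntegrable_of_Icc zero_le_one
  have hpointwise : ∀ p ∈ uIcc (0:ℝ) 1,
      (1 / (2 * Hp ω p s ^ 2) - Hfun ω p s - Omeg ω p + Omeg ω 1 + r) * Hp ω p s =
        Real.sqrt (s ^ 2 - 2 * Omeg ω p) + (r + Omeg ω 1 - s ^ 2 / 2) * Hp ω p s
          - Hfun ω p s * Hp ω p s := fun p hp => by
    rw [uIcc_of_le zero_le_one] at hp
    have hpos := two_mul_Omeg_lt_sq hω hs hp
    have hΩp : Omeg ω p = (s ^ 2 - Real.sqrt (s ^ 2 - 2 * Omeg ω p) ^ 2) / 2 := by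
      rw [Real.sq_sqrt (sub_pos.2 hpos).le]; ring
    have hq : 0 < Real.sqrt (s ^ 2 - 2 * Omeg ω p) := Real.sqrt_pos.2 (sub_pos.2 hpos)
    unfold Hp
    generalize Real.sqrt (s ^ 2 - 2 * Omeg ω p) = q at hΩp hq ⊢
    rw [hΩp]
    field_simp
    ring
  rw [sigmaFun, integral_congr hpointwise,
    integral_sub ((hA.intervalIntegrable 0 1).add (hHp.const_mul _))
      (intervalIntegrable_Hfun_mul_Hp hω hs),
    integral_add (hA.intervalIntegrable 0 1) (hHp.const_mul _),
    intervalIntegral.integral_const_mul, integral_Hfun_mul_Hp hω hs]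
  rfl

theorem kappa_eq (hω : Continuous ω) {s : ℝ} (hs : s0 ω < s) (F r : ℝ) :
    kappa ω F r s = 2 * F - 2 * Efun ω s - (r + Omeg ω 1 - s ^ 2 / 2) ^ 2 := by
  rw [kappa, sigmaFun_eq hω hs, RR]
  ring

theorem hasDerivAt_Efun (hω : Continuous ω) {s : ℝ} (hs : s0 ω < s) :
    HasDerivAt (Efun ω) (s * dd ω s) s := by
  obtain ⟨K, hKs, hK, hKc⟩ := local_compact_nhds (Ioi_mem_nhds hs)
  have hΩ := continuous_Omeg hω
  have h := hasDerivAt_intervalIntegral_of_continuousOn (a := 0) (b := 1)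
    (F := fun x p => Real.sqrt (x ^ 2 - 2 * Omeg ω p)) (F' := fun x p => x * Hp ω p x)
    hKs hKc (fun x _ => by fun_prop) ?_ fun x hx p hp => ?_
  · rwa [intervalIntegral.integral_const_mul] at h
  · rw [uIcc_of_le zero_le_one]
    exact continuous_fst.continuousOn.mul
      ((continuousOn_uncurry_Hp hω).mono (prod_mono hK subset_rfl))
  · rw [uIcc_of_le zero_le_one] at hp
    exact hasDerivAt_sqrt_sq_sub (two_mul_Omeg_lt_sq hω (hK hx) hp)

theorem hasDerivAt_dd (hω : Continuous ω) {s : ℝ} (hs : s0 ω < s) :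
    HasDerivAt (dd ω) (-(s * Jfun ω s)) s := by
  obtain ⟨K, hKs, hK, hKc⟩ := local_compact_nhds (Ioi_mem_nhds hs)
  have h := hasDerivAt_intervalIntegral_of_continuousOn (a := 0) (b := 1)
    (F := fun x p => Hp ω p x) (F' := fun x p => -(x * Hp ω p x ^ 3)) hKs hKc
    (fun x hx => by rw [uIcc_of_le zero_le_one]; exact continuousOn_Hp hω (hK hx)) ?_
    fun x hx p hp => ?_
  · rwa [intervalIntegral.integral_neg, intervalIntegral.integral_const_mul] at h
  · rw [uIcc_of_le zero_le_one]
    exact (continuous_fst.continuousOn.mul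
      (((continuousOn_uncurry_Hp hω).mono (prod_mono hK subset_rfl)).pow 3)).neg
  · rw [uIcc_of_le zero_le_one] at hp
    exact hasDerivAt_inv_sqrt_sq_sub (two_mul_Omeg_lt_sq hω (hK hx) hp)

theorem hasDerivAt_RR (hω : Continuous ω) {s : ℝ} (hs : s0 ω < s) :
    HasDerivAt (RR ω) (s * (1 - Jfun ω s)) s := by
  have h := ((((hasDerivAt_pow 2 s).div_const 2).sub_const (Omeg ω 1)).add (hasDerivAt_dd hω hs))
  refine h.congr_deriv ?_
  norm_num
  ring

theorem hasDerivAt_kappa (hω : Continuous ω) {s : ℝ} (hs : s0 ω < s) (F r : ℝ) :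
    HasDerivAt (kappa ω F r) (2 * s * (r - RR ω s)) s := by
  have h := (((hasDerivAt_Efun hω hs).const_mul 2).const_sub (2 * F)).sub
    ((((hasDerivAt_pow 2 s).div_const 2).const_sub (r + Omeg ω 1)).pow 2)
  have hEq : kappa ω F r =ᶠ[nhds s]
      fun x => 2 * F - 2 * Efun ω x - (r + Omeg ω 1 - x ^ 2 / 2) ^ 2 :=
    eventually_of_mem (Ioi_mem_nhds hs) fun x hx => kappa_eq hω hx F r
  refine (h.congr_of_eventuallyEq hEq).congr_deriv ?_
  rw [RR, dd]
  norm_num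
  ring

theorem Hp_lt_Hp_of_lt (hω : Continuous ω) {s t p : ℝ} (hs : s0 ω < s) (hst : s < t)
    (hp : p ∈ Icc (0:ℝ) 1) : Hp ω p t < Hp ω p s := by
  have hpos := sub_pos.2 (two_mul_Omeg_lt_sq hω hs hp)
  refine inv_strictAnti₀ (Real.sqrt_pos.2 hpos) (Real.sqrt_lt_sqrt hpos.le ?_)
  exact sub_lt_sub_right (pow_lt_pow_left₀ hst (pos_of_s0_lt hs).le two_ne_zero) _

theorem Jfun_strictAntiOn (hω : Continuous ω) : StrictAntiOn (Jfun ω) (Ioi (s0 ω)) := by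
  intro s hs t ht hst
  have hlt : ∀ p ∈ Icc (0:ℝ) 1, Hp ω p t ^ 3 < Hp ω p s ^ 3 := fun p hp =>
    pow_lt_pow_left₀ (Hp_lt_Hp_of_lt hω hs hst hp) (inv_nonneg.2 (Real.sqrt_nonneg _))
      three_ne_zero
  have h0 : (0:ℝ) ∈ Icc 0 1 := left_mem_Icc.2 zero_le_one
  exact integral_lt_integral_of_continuousOn_of_le_of_exists_lt zero_lt_one
    ((continuousOn_Hp hω ht).pow 3) ((continuousOn_Hp hω hs).pow 3)
    (fun p hp => (hlt p (Ioc_subset_Icc_self hp)).le) ⟨0, h0, hlt 0 h0⟩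

theorem RR_strictAntiOn (hω : Continuous ω) {sc : ℝ} (hsc : s0 ω < sc) (hJ : Jfun ω sc = 1) :
    StrictAntiOn (RR ω) (Ioc (s0 ω) sc) := by
  refine strictAntiOn_of_hasDerivWithinAt_neg (convex_Ioc _ _)
    (fun s hs => (hasDerivAt_RR hω hs.1).continuousAt.continuousWithinAt)
    (fun s hs => (hasDerivAt_RR hω (interior_subset hs).1).hasDerivWithinAt) fun s hs => ?_
  rw [interior_Ioc] at hs
  have hJs : 1 < Jfun ω s := hJ ▸ Jfun_strictAntiOn hω hs.1 hsc hs.2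
  exact mul_neg_of_pos_of_neg (pos_of_s0_lt hs.1) (by linarith)

theorem RR_strictMonoOn (hω : Continuous ω) {sc : ℝ} (hsc : s0 ω < sc) (hJ : Jfun ω sc = 1) :
    StrictMonoOn (RR ω) (Ici sc) := by
  refine strictMonoOn_of_hasDerivWithinAt_pos (convex_Ici _)
    (fun s hs => (hasDerivAt_RR hω (hsc.trans_le hs)).continuousAt.continuousWithinAt)
    (fun s hs => (hasDerivAt_RR hω (hsc.trans_le (interior_subset hs))).hasDerivWithinAt)
    fun s hs => ?_
  rw [interior_Ici] at hs
  have hJs : Jfun ω s < 1 := hJ ▸ Jfun_strictAntiOn hω hsc (hsc.trans hs) hs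
  exact mul_pos (pos_of_s0_lt (hsc.trans hs)) (by linarith)

theorem RR_lt_of_mem_Ioo (hω : Continuous ω) {sc sp R0 r s : ℝ} (hsc : s0 ω < sc)
    (hJ : Jfun ω sc = 1) (hR0 : Tendsto (RR ω) (nhdsWithin (s0 ω) (Ioi (s0 ω))) (nhds R0))
    (hr : R0 ≤ r) (hsp : sc < sp) (hRsp : RR ω sp = r) (hs : s ∈ Ioo (s0 ω) sp) :
    RR ω s < r := by
  rcases le_or_gt s sc with hssc | hssc
  · exact ((RR_strictAntiOn hω hsc hJ).lt_of_tendsto_nhdsGT hR0 ⟨hs.1, hssc⟩).trans_le hr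
  · exact hRsp ▸ RR_strictMonoOn hω hsc hJ hssc.le hsp.le hs.2

theorem lt_RR_of_lt (hω : Continuous ω) {sc sp r s : ℝ} (hsc : s0 ω < sc) (hJ : Jfun ω sc = 1)
    (hsp : sc < sp) (hRsp : RR ω sp = r) (hs : sp < s) : r < RR ω s :=
  hRsp ▸ RR_strictMonoOn hω hsc hJ hsp.le (hsp.trans hs).le hs

theorem kappa_strictMonoOn (hω : Continuous ω) {I : Set ℝ} (hI : Convex ℝ I)
    (hIs : I ⊆ Ioi (s0 ω)) {F r : ℝ} (hR : ∀ s ∈ I, RR ω s < r) :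
    StrictMonoOn (kappa ω F r) I := by
  refine strictMonoOn_of_hasDerivWithinAt_pos hI
    (fun s hs => (hasDerivAt_kappa hω (hIs hs) F r).continuousAt.continuousWithinAt)
    (fun s hs => (hasDerivAt_kappa hω (hIs (interior_subset hs)) F r).hasDerivWithinAt)
    fun s hs => ?_
  exact mul_pos (mul_pos two_pos (pos_of_s0_lt (hIs (interior_subset hs))))
    (sub_pos.2 (hR s (interior_subset hs)))

theorem kappa_strictAntiOn (hω : Continuous ω) {I : Set ℝ} (hI : Convex ℝ I)
    (hIs : I ⊆ Ioi (s0 ω)) {F r : ℝ} (hR : ∀ s ∈ I, r < RR ω s) :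
    StrictAntiOn (kappa ω F r) I := by
  refine strictAntiOn_of_hasDerivWithinAt_neg hI
    (fun s hs => (hasDerivAt_kappa hω (hIs hs) F r).continuousAt.continuousWithinAt)
    (fun s hs => (hasDerivAt_kappa hω (hIs (interior_subset hs)) F r).hasDerivWithinAt)
    fun s hs => ?_
  exact mul_neg_of_pos_of_neg (mul_pos two_pos (pos_of_s0_lt (hIs (interior_subset hs))))
    (sub_neg.2 (hR s (interior_subset hs)))

theorem tendsto_kappa_atTop (hω : Continuous ω) (F r : ℝ) :
    Tendsto (kappa ω F r) atTop atBot := by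
  have hsq : Tendsto (fun s : ℝ => (s ^ 2 / 2 - (r + Omeg ω 1)) ^ 2) atTop atTop :=
    (tendsto_pow_atTop two_ne_zero).comp <| tendsto_atTop_add_const_right _ _
      ((tendsto_pow_atTop two_ne_zero).atTop_div_const two_pos)
  have hbound : Tendsto (fun s : ℝ => 2 * F - (r + Omeg ω 1 - s ^ 2 / 2) ^ 2) atTop atBot := by
    refine (tendsto_atBot_add_const_left _ (2 * F) (tendsto_neg_atTop_atBot.comp hsq)).congr
      fun s => ?_
    simp only [Function.comp_apply]
    ring
  refine tendsto_atBot_mono' _ ?_ hbound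
  filter_upwards [eventually_gt_atTop (s0 ω)] with s hs
  have hE : 0 ≤ Efun ω s :=
    intervalIntegral.integral_nonneg zero_le_one fun _ _ => Real.sqrt_nonneg _
  rw [kappa_eq hω hs]
  linarith

end StreamSolution

theorem stmt10_general (ω : ℝ → ℝ) (hω : Continuous ω)
    (sc : ℝ) (hsc : sc ∈ Ioi (s0 ω))
    (hI : (∫ p in (0:ℝ)..1, (Hp ω p sc) ^ 3) = 1)
    (R0 : ℝ) (hR0 : Tendsto (RR ω) (nhdsWithin (s0 ω) (Ioi (s0 ω))) (nhds R0))
    (r : ℝ) (hr : R0 ≤ r)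
    (sp : ℝ) (hsp : sp ∈ Ioi sc) (hRsp : RR ω sp = r)
    (F : ℝ) :
    StrictMonoOn (fun s => 2 * (F - sigmaFun ω s r) - (r - RR ω s) ^ 2) (Ioo (s0 ω) sp) ∧
    StrictAntiOn (fun s => 2 * (F - sigmaFun ω s r) - (r - RR ω s) ^ 2) (Ioi sp) ∧
    Tendsto (fun s => 2 * (F - sigmaFun ω s r) - (r - RR ω s) ^ 2) atTop atBot := by
  refine ⟨kappa_strictMonoOn hω (convex_Ioo _ _) Ioo_subset_Ioi_self
      fun _ hs => RR_lt_of_mem_Ioo hω hsc hI hR0 hr hsp hRsp hs,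
    kappa_strictAntiOn hω (convex_Ioi _) (Ioi_subset_Ioi (hsc.trans hsp).le)
      fun _ hs => lt_RR_of_lt hω hsc hI hsp hRsp hs,
    tendsto_kappa_atTop hω F r⟩

/-- with `s_c` critical, `R₀` finite, `r ≥ R₀`, `s₊(r)` the unique solution of
`R(s) = r` in `(s_c, ∞)` and `F` fixed, the function `s ↦ κ(s;r) = 2(F − σ(s;r)) − (r − R(s))²`
is strictly increasing on `(s₀, s₊(r))`, strictly decreasing on `(s₊(r), ∞)`, and tends to
`−∞` as `s → ∞`. -/
theorem stmt10 (ω : ℝ → ℝ) (hω : Continuous ω)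
    (sc : ℝ) (hsc : sc ∈ Ioi (s0 ω))
    (hI : (∫ p in (0:ℝ)..1, (Hp ω p sc) ^ 3) = 1)
    (R0 : ℝ) (hR0 : Tendsto (RR ω) (nhdsWithin (s0 ω) (Ioi (s0 ω))) (nhds R0))
    (r : ℝ) (hr : R0 ≤ r)
    (sp : ℝ) (hsp : sp ∈ Ioi sc) (hRsp : RR ω sp = r)
    (huniq : ∀ s ∈ Ioi sc, RR ω s = r → s = sp)
    (F : ℝ) :
    StrictMonoOn (fun s => 2 * (F - sigmaFun ω s r) - (r - RR ω s) ^ 2) (Ioo (s0 ω) sp) ∧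
    StrictAntiOn (fun s => 2 * (F - sigmaFun ω s r) - (r - RR ω s) ^ 2) (Ioi sp) ∧
    Tendsto (fun s => 2 * (F - sigmaFun ω s r) - (r - RR ω s) ^ 2) atTop atBot :=
  stmt10_general ω hω sc hsc hI R0 hR0 r hr sp hsp hRsp F
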